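/- arXiv:1208.1915 — 6 statements merged into one kernel-verified Lean document; each statement's English description precedes it below -/
import Mathlib

section
/- Let n ≥ 1 and let x = x_1 x_2 … x_{n+1} be a 210-avoiding primitive ascent sequence of length n+1, and set a_i = i + x_{i+1} − asc(x_1 x_2 … x_{i+1}) for 1 ≤ i ≤ n. If 1 ≤ i < j ≤ n and a_i ≥ a_j, then x_{i+1} > x_{j+1}. -/
/-- `asc x m` is the number of ascents in the sequence `x 1, x 2, …, x m`,
i.e. the number of indices `1 ≤ i ≤ m - 1` with `x i < x (i+1)`. -/
def asc (x : ℕ → ℕ) (m : ℕ) : ℕ :=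
  ((Finset.Ico 1 m).filter (fun i => x i < x (i + 1))).card

/-- `x 1, …, x m` is an ascent sequence. -/
def AscentSeq (x : ℕ → ℕ) (m : ℕ) : Prop :=
  x 1 = 0 ∧ ∀ i, 2 ≤ i → i ≤ m → x i ≤ asc x (i - 1) + 1

/-- `x 1, …, x m` avoids the pattern 210. -/
def Avoids210 (x : ℕ → ℕ) (m : ℕ) : Prop :=
  ¬ ∃ i j k, 1 ≤ i ∧ i < j ∧ j < k ∧ k ≤ m ∧ x j < x i ∧ x k < x j

/-- `x 1, …, x m` is primitive: no two consecutive equal entries. -/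
def Primitive (x : ℕ → ℕ) (m : ℕ) : Prop :=
  ∀ i, 1 ≤ i → i < m → x i ≠ x (i + 1)

/-! Since `a_{k+1} - a_k = (x_{k+2} - x_{k+1}) + [x_{k+1} ≥ x_{k+2}]`, the difference `a_j - a_i`
is `x_{j+1} - x_{i+1}` plus the number of non-ascents of `x` between positions `i+1` and `j+1`.
If `x_{i+1} ≤ x_{j+1}`, either there is such a non-ascent, or all these steps are ascents and
`x_{i+1} < x_{j+1}`; in both cases `a_i < a_j`. -/

lemma asc_succ (x : ℕ → ℕ) {m : ℕ} (hm : 1 ≤ m) :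
    asc x (m + 1) = asc x m + if x m < x (m + 1) then 1 else 0 := by
  unfold asc
  rw [Nat.Ico_succ_right_eq_insert_Ico hm, Finset.filter_insert]
  split
  · rw [Finset.card_insert_of_notMem (by simp), add_comm]
  · simp

lemma asc_succ_le (x : ℕ → ℕ) (m : ℕ) : asc x (m + 1) ≤ m := by
  simpa [asc] using Finset.card_filter_le (Finset.Ico 1 (m + 1)) (fun i => x i < x (i + 1))

lemma asc_add_le (x : ℕ → ℕ) (m k : ℕ) : asc x (m + k) ≤ asc x m + k := by
  calc asc x (m + k)
      ≤ (((Finset.Ico 1 m).filter (fun i => x i < x (i + 1))) ∪ Finset.Ico m (m + k)).card := by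
        refine Finset.card_le_card fun i hi => ?_
        simp only [Finset.mem_union, Finset.mem_filter, Finset.mem_Ico] at hi ⊢
        omega
    _ ≤ asc x m + k := by
        simpa [asc] using Finset.card_union_le
          ((Finset.Ico 1 m).filter (fun i => x i < x (i + 1))) (Finset.Ico m (m + k))

lemma add_le_of_asc_add_eq (x : ℕ → ℕ) {m : ℕ} (hm : 1 ≤ m) :
    ∀ k, asc x (m + k) = asc x m + k → x m + k ≤ x (m + k)
  | 0, _ => le_rfl
  | k + 1, hk => by
    have hstep := asc_succ x (show 1 ≤ m + k by omega)
    have hle := asc_add_le x m k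
    rw [← add_assoc] at hk
    have hasc : x (m + k) < x (m + k + 1) := by
      by_contra h
      rw [if_neg h] at hstep
      omega
    have := add_le_of_asc_add_eq x hm k (by rw [if_pos hasc] at hstep; omega)
    show x m + (k + 1) ≤ x (m + k + 1)
    omega

lemma sub_asc_lt_of_le (x : ℕ → ℕ) {i j : ℕ} (hij : i < j) (hx : x (i + 1) ≤ x (j + 1)) :
    i + x (i + 1) - asc x (i + 1) < j + x (j + 1) - asc x (j + 1) := by
  obtain ⟨k, rfl⟩ := Nat.exists_eq_add_of_lt hij
  have hi := asc_succ_le x i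
  have hj := asc_succ_le x (i + k + 1)
  have hsplit : i + k + 1 + 1 = (i + 1) + (k + 1) := by omega
  rw [hsplit] at hx hj ⊢
  rcases (asc_add_le x (i + 1) (k + 1)).lt_or_eq with hlt | heq
  · omega
  · have := add_le_of_asc_add_eq x (by omega) (k + 1) heq
    omega

theorem stmt0_general (n : ℕ) (x : ℕ → ℕ)
    (a : ℕ → ℕ) (ha : ∀ i, 1 ≤ i → i ≤ n → a i = i + x (i + 1) - asc x (i + 1)) :
    ∀ i j, 1 ≤ i → i < j → j ≤ n → a j ≤ a i → x (j + 1) < x (i + 1) := by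
  intro i j hi hij hj haji
  by_contra! hx
  rw [ha i hi (by omega), ha j (by omega) hj] at haji
  exact haji.not_gt (sub_asc_lt_of_le x hij hx)

/-- Lemma 3.1: if `x` is a 210-avoiding primitive ascent sequence of length `n+1` and
`a i = i + x (i+1) - asc(x 1 … x (i+1))`, then `a i ≥ a j` with `i < j` forces
`x (i+1) > x (j+1)`. -/
theorem stmt0 (n : ℕ) (hn : 1 ≤ n) (x : ℕ → ℕ)
    (hasc : AscentSeq x (n + 1)) (hav : Avoids210 x (n + 1)) (hprim : Primitive x (n + 1))
    (a : ℕ → ℕ) (ha : ∀ i, 1 ≤ i → i ≤ n → a i = i + x (i + 1) - asc x (i + 1)) :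
    ∀ i j, 1 ≤ i → i < j → j ≤ n → a j ≤ a i → x (j + 1) < x (i + 1) :=
  stmt0_general n x a ha
end

section
/- Let n ≥ 1, let (a_1, …, a_n) ∈ N(Δ_n), and let x_1, …, x_{n+1} be the sequence produced from (a_1, …, a_n) by the recursive rule. Then x_{i+1} = asc(x_1 x_2 … x_{i+1}) + a_i − i for all 1 ≤ i ≤ n. -/
/-! Induction on `i`. If `x i = asc(x 1 … x i) + a (i-1) - (i-1)`, the rule gives
`x (i+1) - x i = [a (i-1) < a i] + a i - a (i-1) - 1`, which is positive exactly when
`a (i-1) < a i`. So the rule adds its extra `1` precisely when `x i < x (i+1)` is a new ascent. -/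

/-- `ascZ x m` is the number of ascents in the integer sequence `x 1, …, x m`. -/
def ascZ (x : ℕ → ℤ) (m : ℕ) : ℕ :=
  ((Finset.Ico 1 m).filter (fun i => x i < x (i + 1))).card

/-- `(a 1, …, a n) ∈ N(Δ_n)`: a 01-filling of the staircase `Δ_n` where row `i`
has its unique 1 in column `a i` (so `1 ≤ a i ≤ i`), with no NE-chain of length 3
(no `i < j < k` with `a i ≥ a j ≥ a k`). -/
def NDelta (a : ℕ → ℕ) (n : ℕ) : Prop :=
  (∀ i, 1 ≤ i → i ≤ n → 1 ≤ a i ∧ a i ≤ i) ∧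
  ¬ ∃ i j k, 1 ≤ i ∧ i < j ∧ j < k ∧ k ≤ n ∧ a j ≤ a i ∧ a k ≤ a j

/-- `x 1, …, x (n+1)` is the (integer-valued) sequence produced from `(a 1, …, a n)`
by the recursive rule: `x 1 = 0`, `x 2 = 1`, and for `2 ≤ i ≤ n`,
`x (i+1) = asc(x 1 … x i) + 1 + a i - i` if `a (i-1) < a i`, and
`x (i+1) = asc(x 1 … x i) + a i - i` if `a (i-1) ≥ a i`. -/
def RecRule (a : ℕ → ℕ) (n : ℕ) (x : ℕ → ℤ) : Prop :=
  x 1 = 0 ∧ x 2 = 1 ∧ ∀ i, 2 ≤ i → i ≤ n →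
    x (i + 1) = if a (i - 1) < a i
      then (ascZ x i : ℤ) + 1 + (a i : ℤ) - (i : ℤ)
      else (ascZ x i : ℤ) + (a i : ℤ) - (i : ℤ)

lemma ascZ_one (x : ℕ → ℤ) : ascZ x 1 = 0 := rfl

lemma ascZ_succ (x : ℕ → ℤ) {m : ℕ} (hm : 1 ≤ m) :
    ascZ x (m + 1) = ascZ x m + if x m < x (m + 1) then 1 else 0 := by
  unfold ascZ
  rw [Nat.Ico_succ_right_eq_insert_Ico hm, Finset.filter_insert]
  split
  · rw [Finset.card_insert_of_notMem (by simp)]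
  · simp

lemma recRule_step_invariant (a : ℕ → ℕ) (x : ℕ → ℤ) {i : ℕ}
    (hinv : x (i + 1) = (ascZ x (i + 1) : ℤ) + a i - i)
    (hrule : x (i + 2) = if a i < a (i + 1)
      then (ascZ x (i + 1) : ℤ) + 1 + a (i + 1) - (i + 1 : ℕ)
      else (ascZ x (i + 1) : ℤ) + a (i + 1) - (i + 1 : ℕ)) :
    x (i + 2) = (ascZ x (i + 2) : ℤ) + a (i + 1) - (i + 1 : ℕ) := by
  rw [ascZ_succ x (by omega : 1 ≤ i + 1)]
  by_cases h : a i < a (i + 1)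
  · rw [if_pos h] at hrule
    have hasc : x (i + 1) < x (i + 1 + 1) := by rw [hrule, hinv]; push_cast; omega
    rw [if_pos hasc, hrule]; push_cast; ring
  · rw [if_neg h] at hrule
    have hasc : ¬ x (i + 1) < x (i + 1 + 1) := by rw [hrule, hinv]; push_cast; omega
    rw [if_neg hasc, hrule]; push_cast; ring

theorem stmt2_general (n : ℕ) (a : ℕ → ℕ) (hA : NDelta a n)
    (x : ℕ → ℤ) (hx : RecRule a n x) :
    ∀ i, 1 ≤ i → i ≤ n → x (i + 1) = (ascZ x (i + 1) : ℤ) + (a i : ℤ) - (i : ℤ) := by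
  obtain ⟨hx1, hx2, hrec⟩ := hx
  intro i hi
  induction i, hi using Nat.le_induction with
  | base =>
    intro hn
    have ha1 : a 1 = 1 := le_antisymm (hA.1 1 le_rfl hn).2 (hA.1 1 le_rfl hn).1
    rw [ascZ_succ x le_rfl, ascZ_one, hx1, hx2, ha1]
    norm_num
  | succ i hi ih =>
    intro hin
    exact recRule_step_invariant a x (ih (by omega)) (hrec (i + 1) (by omega) hin)

/-- Lemma 3.3 (first part): for `(a 1, …, a n) ∈ N(Δ_n)`, the sequence produced by the
recursive rule satisfies `x (i+1) = asc(x 1 … x (i+1)) + a i - i` for all `1 ≤ i ≤ n`. -/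
theorem stmt2 (n : ℕ) (hn : 1 ≤ n) (a : ℕ → ℕ) (hA : NDelta a n)
    (x : ℕ → ℤ) (hx : RecRule a n x) :
    ∀ i, 1 ≤ i → i ≤ n → x (i + 1) = (ascZ x (i + 1) : ℤ) + (a i : ℤ) - (i : ℤ) :=
  stmt2_general n a hA x hx
end

section
/- Let n ≥ 1 and let x = x_1 x_2 … x_{n+1} be a 210-avoiding primitive ascent sequence of length n+1. Set a_i = i + x_{i+1} − asc(x_1 x_2 … x_{i+1}) for 1 ≤ i ≤ n, and let x'_1, …, x'_{n+1} be the sequence produced from (a_1, …, a_n) by the recursive rule. Then x'_i = x_i for all 1 ≤ i ≤ n+1. -/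
lemma ascZ_eq_asc_of_eqOn (x : ℕ → ℕ) (x' : ℕ → ℤ) {m : ℕ}
    (h : ∀ j, 1 ≤ j → j ≤ m → x' j = x j) : ascZ x' m = asc x m := by
  unfold ascZ asc
  congr 1
  refine Finset.filter_congr fun j hj => ?_
  rw [Finset.mem_Ico] at hj
  rw [h j hj.1 hj.2.le, h (j + 1) (by omega) hj.2]
  exact Nat.cast_lt

def ascCode (x : ℕ → ℕ) (i : ℕ) : ℕ :=
  i + x (i + 1) - asc x (i + 1)

lemma ascCode_cast (x : ℕ → ℕ) (i : ℕ) :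
    (ascCode x i : ℤ) = i + x (i + 1) - asc x (i + 1) := by
  have := asc_succ_le x i
  unfold ascCode
  omega

lemma ascCode_pred_lt_iff {x : ℕ → ℕ} {i : ℕ} (hi : 2 ≤ i) (hne : x i ≠ x (i + 1)) :
    ascCode x (i - 1) < ascCode x i ↔ x i < x (i + 1) := by
  obtain ⟨j, rfl⟩ : ∃ j, i = j + 1 := ⟨i - 1, by omega⟩
  have hsucc := asc_succ x (m := j + 1) (by omega)
  have := asc_succ_le x j
  have := asc_succ_le x (j + 1)
  simp only [ascCode, Nat.add_sub_cancel] at hsucc ⊢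
  split at hsucc <;> omega

lemma recRule_step_ascCode {x : ℕ → ℕ} {i : ℕ} (hi : 2 ≤ i) (hne : x i ≠ x (i + 1)) :
    (if ascCode x (i - 1) < ascCode x i
      then (asc x i : ℤ) + 1 + (ascCode x i : ℤ) - (i : ℤ)
      else (asc x i : ℤ) + (ascCode x i : ℤ) - (i : ℤ)) = x (i + 1) := by
  have hsucc := asc_succ x (m := i) (by omega)
  have := ascCode_cast x i
  split_ifs with h <;> rw [ascCode_pred_lt_iff hi hne] at h
  · rw [if_pos h] at hsucc; omega
  · rw [if_neg h] at hsucc; omega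

theorem stmt6_general (n : ℕ) (x : ℕ → ℕ)
    (hasc : AscentSeq x (n + 1)) (hprim : Primitive x (n + 1))
    (a : ℕ → ℕ) (ha : ∀ i, 1 ≤ i → i ≤ n → a i = i + x (i + 1) - asc x (i + 1))
    (x' : ℕ → ℤ) (hx' : RecRule a n x') :
    ∀ i, 1 ≤ i → i ≤ n + 1 → x' i = (x i : ℤ) := by
  obtain ⟨hx'1, hx'2, hx'step⟩ := hx'
  have hcode : ∀ i, 1 ≤ i → i ≤ n → a i = ascCode x i := ha
  intro i
  induction i using Nat.strong_induction_on with
  | _ i ih =>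
    intro hi hin
    rcases (by omega : i = 1 ∨ i = 2 ∨ 3 ≤ i) with rfl | rfl | hi3
    · simp [hx'1, hasc.1]
    · have hx2 : x 2 ≤ 1 := by simpa [asc] using hasc.2 2 le_rfl hin
      have hx12 : x 1 ≠ x 2 := hprim 1 le_rfl (by omega)
      rw [hasc.1] at hx12
      rw [hx'2]
      omega
    · obtain ⟨m, rfl⟩ : ∃ m, i = m + 1 := ⟨i - 1, by omega⟩
      have hm : 2 ≤ m := by omega
      rw [hx'step m hm (by omega),
        ascZ_eq_asc_of_eqOn x x' fun j hj hjm => ih j (by omega) hj (by omega),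
        hcode m (by omega) (by omega), hcode (m - 1) (by omega) (by omega)]
      exact recRule_step_ascCode hm (hprim m (by omega) (by omega))

/-- Part of Theorem 3.5 (`φ' ∘ φ = id`): if `x` is a 210-avoiding primitive ascent sequence
of length `n+1`, `a i = i + x (i+1) - asc(x 1 … x (i+1))`, and `x'` is produced from
`(a 1, …, a n)` by the recursive rule, then `x' i = x i` for all `1 ≤ i ≤ n+1`. -/
theorem stmt6 (n : ℕ) (hn : 1 ≤ n) (x : ℕ → ℕ)
    (hasc : AscentSeq x (n + 1)) (hav : Avoids210 x (n + 1)) (hprim : Primitive x (n + 1))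
    (a : ℕ → ℕ) (ha : ∀ i, 1 ≤ i → i ≤ n → a i = i + x (i + 1) - asc x (i + 1))
    (x' : ℕ → ℤ) (hx' : RecRule a n x') :
    ∀ i, 1 ≤ i → i ≤ n + 1 → x' i = (x i : ℤ) :=
  stmt6_general n x hasc hprim a ha x' hx'
end

section
/- Let ρ, μ, υ be partitions such that μ is equal to ρ or obtained from ρ by adding a square, and υ is equal to ρ or obtained from ρ by adding a square, let m ∈ {0, 1}, and let λ be the output of the forward local rule applied to (ρ, μ, υ, m). Then: (a) if m = 0 and ρ = υ, then λ = μ; (b) if m = 1 and ρ = υ, then λ is obtained from μ by adding a square; (c) if m = 0 and υ is obtained from ρ by adding a square, then λ is obtained from μ by adding a square. -/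
/-- A partition, viewed as a weakly decreasing, eventually-zero sequence
`f 0 ≥ f 1 ≥ …` (with `f i` the `(i+1)`-st part `λ_{i+1}`). -/
def IsPartFn (f : ℕ → ℕ) : Prop :=
  (∀ i j, i ≤ j → f j ≤ f i) ∧ ∃ N, ∀ i, N ≤ i → f i = 0

/-- `lam` is obtained from `μ` by adding a square: one part grows by 1, the rest agree. -/
def AddSq (μ lam : ℕ → ℕ) : Prop :=
  ∃ j, lam j = μ j + 1 ∧ ∀ i, i ≠ j → lam i = μ i

/-- The carries `a_1, a_2, …` of the forward local rule (0-indexed: `fcarry … i = a_{i+1}`):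
`a_1 = m` and `a_{i+1} = min (μ_i + a_i) υ_i - ρ_i`. -/
def fcarry (ρ μ υ : ℕ → ℕ) (m : ℕ) : ℕ → ℕ
  | 0 => m
  | i + 1 => min (μ i + fcarry ρ μ υ m i) (υ i) - ρ i

/-- The output `λ` of the forward local rule applied to `(ρ, μ, υ, m)`:
`λ_i = max (μ_i + a_i) υ_i` (0-indexed). -/
def frule (ρ μ υ : ℕ → ℕ) (m : ℕ) (i : ℕ) : ℕ :=
  max (μ i + fcarry ρ μ υ m i) (υ i)

/-!
Write a square added at position `j` as `Function.update ρ j (ρ j + 1)`. The carry out of row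
`i` is `min (μ i + a i) (υ i) - ρ i`, which vanishes whenever `υ i = ρ i`. So if `υ = ρ` the
only possible carry is `a_1 = m`, and `λ` is `μ` with `m` added to its first row. If `υ` adds a
square at `k` and `m = 0`, the only possible carry is out of row `k`, and it is `1` exactly when
`μ` adds its square at `k` too: then `λ` adds a square to `μ` in row `k + 1`; otherwise no
carry occurs, `λ = μ ⊔ υ`, and this adds a square to `μ` in row `k`.
-/

open Function

section LocalRule

variable {ρ μ υ : ℕ → ℕ} {m k : ℕ}

lemma addSq_iff_exists_eq_update {μ lam : ℕ → ℕ} :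
    AddSq μ lam ↔ ∃ j, lam = update μ j (μ j + 1) := by
  constructor
  · rintro ⟨j, hj, hne⟩
    refine ⟨j, funext fun i => ?_⟩
    rcases eq_or_ne i j with rfl | hij
    · simp [hj]
    · simp [hij, hne i hij]
  · rintro ⟨j, rfl⟩
    exact ⟨j, by simp, fun i hij => by simp [hij]⟩

lemma addSq_update_succ (μ : ℕ → ℕ) (j : ℕ) : AddSq μ (update μ j (μ j + 1)) :=
  addSq_iff_exists_eq_update.2 ⟨j, rfl⟩

lemma le_update_succ (ρ : ℕ → ℕ) (k : ℕ) : ρ ≤ update ρ k (ρ k + 1) := by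
  intro i
  rcases eq_or_ne i k with rfl | hik
  · simp
  · simp [hik]

lemma le_of_eq_or_addSq (h : μ = ρ ∨ AddSq ρ μ) : ρ ≤ μ := by
  rcases h with rfl | h
  · exact le_rfl
  · obtain ⟨j, rfl⟩ := addSq_iff_exists_eq_update.1 h
    exact le_update_succ ρ j

lemma eq_update_of_apply_ne (h : μ = ρ ∨ AddSq ρ μ) (hk : μ k ≠ ρ k) :
    μ = update ρ k (ρ k + 1) := by
  rcases h with rfl | h
  · exact absurd rfl hk
  obtain ⟨j, rfl⟩ := addSq_iff_exists_eq_update.1 h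
  obtain rfl : k = j := by
    by_contra hkj
    exact hk (update_of_ne hkj _ _)
  rfl

lemma fcarry_succ_eq_zero_of_le {i : ℕ} (h : υ i ≤ ρ i) : fcarry ρ μ υ m (i + 1) = 0 := by
  simp only [fcarry]
  omega

lemma frule_base_eq_update (hρμ : ρ ≤ μ) : frule ρ μ ρ m = update μ 0 (μ 0 + m) := by
  funext i
  rcases i with _ | n
  · simp only [frule, fcarry, update_self]
    exact max_eq_left ((hρμ 0).trans (Nat.le_add_right _ _))
  · rw [frule, fcarry_succ_eq_zero_of_le le_rfl, update_of_ne n.succ_ne_zero, add_zero]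
    exact max_eq_left (hρμ _)

lemma fcarry_zero_eq_zero (h : ∀ i, min (μ i) (υ i) ≤ ρ i) (i : ℕ) : fcarry ρ μ υ 0 i = 0 := by
  induction i with
  | zero => rfl
  | succ n ih =>
    simp only [fcarry, ih, add_zero]
    exact Nat.sub_eq_zero_of_le (h n)

lemma frule_zero_eq_sup (h : ∀ i, min (μ i) (υ i) ≤ ρ i) : frule ρ μ υ 0 = μ ⊔ υ := by
  funext i
  simp [frule, fcarry_zero_eq_zero h]

lemma frule_zero_update_of_apply_eq (hρμ : ρ ≤ μ) (hk : μ k = ρ k) :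
    frule ρ μ (update ρ k (ρ k + 1)) 0 = update μ k (μ k + 1) := by
  have hmin : ∀ i, min (μ i) (update ρ k (ρ k + 1) i) ≤ ρ i := by
    intro i
    rcases eq_or_ne i k with rfl | hik
    · exact hk ▸ min_le_left _ _
    · exact (update_of_ne hik _ ρ).symm ▸ min_le_right _ _
  rw [frule_zero_eq_sup hmin]
  funext i
  rcases eq_or_ne i k with rfl | hik
  · simp [hk]
  · simpa [hik] using hρμ i

/-- When `μ = υ` the carry out of row `i` is `υ i - ρ i`, whatever came in. -/
lemma frule_diag_succ (i : ℕ) :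
    frule ρ υ υ m (i + 1) = υ (i + 1) + (υ i - ρ i) := by
  simp only [frule, fcarry, min_eq_right (Nat.le_add_right _ _)]
  omega

lemma frule_diag_zero_update (hυ : υ = update ρ k (ρ k + 1)) :
    frule ρ υ υ 0 = update υ (k + 1) (υ (k + 1) + 1) := by
  subst hυ
  funext i
  rcases i with _ | n
  · simp [frule, fcarry]
  · rw [frule_diag_succ]
    rcases eq_or_ne n k with rfl | hnk
    · simp
    · simp [hnk]

end LocalRule

theorem stmt9_general (ρ μ υ : ℕ → ℕ)
    (hρμ : μ = ρ ∨ AddSq ρ μ) (m : ℕ) :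
    (m = 0 → υ = ρ → frule ρ μ υ m = μ) ∧
    (m = 1 → υ = ρ → AddSq μ (frule ρ μ υ m)) ∧
    (m = 0 → AddSq ρ υ → AddSq μ (frule ρ μ υ m)) := by
  have hle := le_of_eq_or_addSq hρμ
  refine ⟨?_, ?_, ?_⟩
  · rintro rfl rfl
    rw [frule_base_eq_update hle, add_zero, update_eq_self]
  · rintro rfl rfl
    rw [frule_base_eq_update hle]
    exact addSq_update_succ μ 0
  · rintro rfl hυ
    obtain ⟨k, rfl⟩ := addSq_iff_exists_eq_update.1 hυ
    by_cases hk : μ k = ρ k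
    · rw [frule_zero_update_of_apply_eq hle hk]
      exact addSq_update_succ μ k
    · rw [eq_update_of_apply_ne hρμ hk, frule_diag_zero_update rfl]
      exact addSq_update_succ _ _

/-- Properties (a), (b), (c) in the proof of Lemma 2.3: with `μ` and `υ` each equal to `ρ`
or obtained from `ρ` by adding a square, and `m ∈ {0,1}`, the output `λ` of the forward
local rule satisfies:
(a) if `m = 0` and `ρ = υ` then `λ = μ`;
(b) if `m = 1` and `ρ = υ` then `λ` is obtained from `μ` by adding a square;
(c) if `m = 0` and `υ` is obtained from `ρ` by adding a square, then `λ` is obtained from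
`μ` by adding a square. -/
theorem stmt9 (ρ μ υ : ℕ → ℕ) (hρ : IsPartFn ρ) (hμ : IsPartFn μ) (hυ : IsPartFn υ)
    (hρμ : μ = ρ ∨ AddSq ρ μ) (hρυ : υ = ρ ∨ AddSq ρ υ) (m : ℕ) (hm : m ≤ 1) :
    (m = 0 → υ = ρ → frule ρ μ υ m = μ) ∧
    (m = 1 → υ = ρ → AddSq μ (frule ρ μ υ m)) ∧
    (m = 0 → AddSq ρ υ → AddSq μ (frule ρ μ υ m)) :=
  stmt9_general ρ μ υ hρμ m
end

section
/- For every n ≥ 0 and every k ≥ 1, the number of k-nonnesting set partitions of [n+1] = {1, …, n+1} equals the number of 01-fillings of the staircase shape Δ_n with at most one 1 per row and per column containing no NE-chain of length k. -/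
/-- `P` is a set partition of `{1, …, n}` (modeled on `Fin n`): a collection of nonempty
pairwise disjoint blocks whose union is everything. -/
def IsSetPartition {n : ℕ} (P : Finset (Finset (Fin n))) : Prop :=
  (∀ B ∈ P, B.Nonempty) ∧
  (∀ B ∈ P, ∀ C ∈ P, B ≠ C → Disjoint B C) ∧
  (∀ x : Fin n, ∃ B ∈ P, x ∈ B)

/-- `(a, b)` is an arc of the set partition `P`: `a < b` lie in a common block and no
element of that block lies strictly between them. -/
def IsArc {n : ℕ} (P : Finset (Finset (Fin n))) (a b : Fin n) : Prop :=
  a < b ∧ ∃ B ∈ P, a ∈ B ∧ b ∈ B ∧ ∀ c ∈ B, ¬(a < c ∧ c < b)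

/-- `P` is `k`-nonnesting: there are no `k` arcs `(i_1, j_1), …, (i_k, j_k)` with
`i_1 < i_2 < … < i_k < j_k < … < j_2 < j_1`. -/
def Nonnesting {n : ℕ} (k : ℕ) (P : Finset (Finset (Fin n))) : Prop :=
  ¬ ∃ i j : Fin k → Fin n, (∀ t, IsArc P (i t) (j t)) ∧
    (∀ s t, s < t → i s < i t) ∧ (∀ s t, s < t → j t < j s) ∧ (∀ s t, i s < j t)

/-- A 01-filling of the staircase shape `Δ_n` with at most one 1 per row and per column:
a set `S` of cells `(r, c)` with `1 ≤ c ≤ r ≤ n`, no two sharing a row and no two sharing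
a column. -/
def IsFilling (n : ℕ) (S : Finset (ℕ × ℕ)) : Prop :=
  (∀ p ∈ S, 1 ≤ p.2 ∧ p.2 ≤ p.1 ∧ p.1 ≤ n) ∧
  (∀ p ∈ S, ∀ q ∈ S, p.1 = q.1 → p = q) ∧
  (∀ p ∈ S, ∀ q ∈ S, p.2 = q.2 → p = q)

/-- `S` contains an NE-chain of length `k`: cells `(r_1, c_1), …, (r_k, c_k) ∈ S` with
`r_1 > r_2 > … > r_k` and `c_1 ≤ c_2 ≤ … ≤ c_k`. -/
def NEChain (S : Finset (ℕ × ℕ)) (k : ℕ) : Prop :=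
  ∃ f : Fin k → ℕ × ℕ, (∀ t, f t ∈ S) ∧
    (∀ s t : Fin k, s < t → (f t).1 < (f s).1) ∧
    (∀ s t : Fin k, s < t → (f s).2 ≤ (f t).2)

/-! A set partition of `[m]` is determined by its arcs, which form a strictly increasing partial
injection on `[m]`; conversely, every strictly increasing partial injection is the arc relation of
the partition into its chains `a ↦ b ↦ ⋯`. Recording the arc `(a, b)` as the cell `(b, a + 1)`
identifies these partial injections on `[n + 1]` with the fillings of `Δ_n` having at most one 1
per row and per column, and a `k`-nesting of arcs becomes an NE-chain of length `k`. -/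

open Finset Relation

theorem Relation.ReflTransGen.le_of_increasing {α : Type*} [Preorder α] {r : α → α → Prop}
    (hr : ∀ ⦃a b⦄, r a b → a < b) {x y : α} (h : ReflTransGen r x y) : x ≤ y := by
  induction h with
  | refl => exact le_rfl
  | tail _ hyz ih => exact ih.trans (hr hyz).le

section Linked

variable {α : Type*} {r : α → α → Prop}

def Linked (r : α → α → Prop) (x y : α) : Prop :=
  ReflTransGen r x y ∨ ReflTransGen r y x

theorem Linked.refl (x : α) : Linked r x x := Or.inl .refl

theorem Linked.symm {x y : α} (h : Linked r x y) : Linked r y x := Or.symm h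

theorem Linked.trans (hr : Relator.RightUnique r) (hl : Relator.LeftUnique r) {x y z : α}
    (hxy : Linked r x y) (hyz : Linked r y z) : Linked r x z := by
  rcases hxy with hxy | hyx <;> rcases hyz with hyz | hzy
  · exact Or.inl (hxy.trans hyz)
  · exact (ReflTransGen.total_of_right_unique hl.flip (reflTransGen_swap.mpr hxy)
      (reflTransGen_swap.mpr hzy)).symm.imp reflTransGen_swap.mp reflTransGen_swap.mp
  · exact ReflTransGen.total_of_right_unique hr hyx hyz
  · exact Or.inr (hzy.trans hyx)

end Linked

section LinkedBlocks

variable {m : ℕ} {R : Fin m → Fin m → Prop}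

open Classical in
noncomputable def linkedBlock (R : Fin m → Fin m → Prop) (x : Fin m) : Finset (Fin m) :=
  univ.filter (Linked R x)

noncomputable def linkedBlocks (R : Fin m → Fin m → Prop) : Finset (Finset (Fin m)) :=
  univ.image (linkedBlock R)

@[simp]
theorem mem_linkedBlock {x y : Fin m} : y ∈ linkedBlock R x ↔ Linked R x y := by
  simp [linkedBlock]

theorem linkedBlock_mem_linkedBlocks (x : Fin m) : linkedBlock R x ∈ linkedBlocks R :=
  mem_image_of_mem _ (mem_univ x)

theorem isSetPartition_linkedBlocks (hr : Relator.RightUnique R) (hl : Relator.LeftUnique R) :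
    IsSetPartition (linkedBlocks R) := by
  have hblock : ∀ {x y}, Linked R x y → linkedBlock R x = linkedBlock R y := fun h => by
    ext z
    simp only [mem_linkedBlock]
    exact ⟨h.symm.trans hr hl, h.trans hr hl⟩
  refine ⟨?_, ?_, fun x => ⟨_, linkedBlock_mem_linkedBlocks x, mem_linkedBlock.mpr (.refl x)⟩⟩
  · simp only [linkedBlocks, forall_mem_image, mem_univ, forall_const]
    exact fun x => ⟨x, mem_linkedBlock.mpr (.refl x)⟩
  · simp only [linkedBlocks, forall_mem_image, mem_univ, forall_const]
    intro x y hne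
    refine disjoint_left.mpr fun z hxz hyz => hne ?_
    rw [hblock (mem_linkedBlock.mp hxz), hblock (mem_linkedBlock.mp hyz)]

theorem isArc_linkedBlocks (hinc : ∀ ⦃a b⦄, R a b → a < b) (hr : Relator.RightUnique R)
    (hl : Relator.LeftUnique R) : IsArc (linkedBlocks R) = R := by
  have hreach : ∀ {a c}, a < c → Linked R a c → ReflTransGen R a c := fun hac h =>
    h.resolve_right fun hca => (hca.le_of_increasing hinc).not_gt hac
  ext a b
  constructor
  · rintro ⟨hab, B, hB, haB, hbB, hgap⟩
    obtain ⟨x, -, rfl⟩ := mem_image.mp hB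
    have hxa := mem_linkedBlock.mp haB
    obtain rfl | ⟨d, had, hdb⟩ :=
      (hreach hab (hxa.symm.trans hr hl (mem_linkedBlock.mp hbB))).cases_head
    · exact absurd hab (lt_irrefl a)
    have hdB : d ∈ linkedBlock R x := mem_linkedBlock.mpr (hxa.trans hr hl (Or.inl (.single had)))
    obtain rfl : d = b :=
      (hdb.le_of_increasing hinc).eq_of_not_lt fun hlt => hgap d hdB ⟨hinc had, hlt⟩
    exact had
  · intro hab
    refine ⟨hinc hab, _, linkedBlock_mem_linkedBlocks a, mem_linkedBlock.mpr (.refl a),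
      mem_linkedBlock.mpr (Or.inl (.single hab)), fun c hc ⟨hac, hcb⟩ => ?_⟩
    obtain rfl | ⟨d, had, hdc⟩ := (hreach hac (mem_linkedBlock.mp hc)).cases_head
    · exact lt_irrefl a hac
    obtain rfl := hr had hab
    exact (hdc.le_of_increasing hinc).not_gt hcb

end LinkedBlocks

namespace IsSetPartition

variable {m : ℕ} {P : Finset (Finset (Fin m))}

theorem eq_of_mem_of_mem (hP : IsSetPartition P) {B C : Finset (Fin m)} {x : Fin m}
    (hB : B ∈ P) (hC : C ∈ P) (hxB : x ∈ B) (hxC : x ∈ C) : B = C :=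
  by_contra fun h => disjoint_left.mp (hP.2.1 B hB C hC h) hxB hxC

theorem rightUnique_isArc (hP : IsSetPartition P) : Relator.RightUnique (IsArc P) := by
  rintro a b b' ⟨hab, B, hB, haB, hbB, hgap⟩ ⟨hab', B', hB', haB', hbB', hgap'⟩
  obtain rfl := hP.eq_of_mem_of_mem hB hB' haB haB'
  by_contra hne
  rcases lt_or_gt_of_ne hne with h | h
  exacts [hgap' b hbB ⟨hab, h⟩, hgap b' hbB' ⟨hab', h⟩]

theorem leftUnique_isArc (hP : IsSetPartition P) : Relator.LeftUnique (IsArc P) := by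
  rintro a a' b ⟨hab, B, hB, haB, hbB, hgap⟩ ⟨hab', B', hB', haB', hbB', hgap'⟩
  obtain rfl := hP.eq_of_mem_of_mem hB hB' hbB hbB'
  by_contra hne
  rcases lt_or_gt_of_ne hne with h | h
  exacts [hgap a' haB' ⟨h, hab'⟩, hgap' a haB ⟨h, hab⟩]

theorem reflTransGen_isArc_iff (hP : IsSetPartition P) {B : Finset (Fin m)} {x y : Fin m}
    (hB : B ∈ P) (hx : x ∈ B) : ReflTransGen (IsArc P) x y ↔ y ∈ B ∧ x ≤ y := by
  constructor
  · intro h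
    induction h with
    | refl => exact ⟨hx, le_rfl⟩
    | tail _ hyz ih =>
      obtain ⟨hyz, C, hC, hyC, hzC, -⟩ := hyz
      obtain rfl := hP.eq_of_mem_of_mem hB hC ih.1 hyC
      exact ⟨hzC, ih.2.trans hyz.le⟩
  · rintro ⟨hy, hxy⟩
    induction y using WellFoundedLT.induction with
    | _ y ih =>
    rcases hxy.eq_or_lt with rfl | hxy
    · exact .refl
    classical
    -- the arc ending at `y` starts at the largest element of `B` below `y`
    have hne : (B.filter (· < y)).Nonempty := ⟨x, mem_filter.mpr ⟨hx, hxy⟩⟩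
    obtain ⟨hpB, hpy⟩ := mem_filter.mp (max'_mem _ hne)
    have harc : IsArc P ((B.filter (· < y)).max' hne) y :=
      ⟨hpy, B, hB, hpB, hy, fun c hc ⟨hpc, hcy⟩ =>
        (le_max' _ c (mem_filter.mpr ⟨hc, hcy⟩)).not_gt hpc⟩
    exact (ih _ hpy hpB (le_max' _ x (mem_filter.mpr ⟨hx, hxy⟩))).tail harc

theorem linkedBlocks_isArc (hP : IsSetPartition P) : linkedBlocks (IsArc P) = P := by
  have hblock : ∀ {B x}, B ∈ P → x ∈ B → linkedBlock (IsArc P) x = B := fun {B x} hB hx => by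
    ext y
    rw [mem_linkedBlock, Linked, hP.reflTransGen_isArc_iff hB hx]
    constructor
    · rintro (⟨hy, -⟩ | hyx)
      · exact hy
      · obtain ⟨C, hC, hyC⟩ := hP.2.2 y
        obtain ⟨hxC, -⟩ := (hP.reflTransGen_isArc_iff hC hyC).mp hyx
        rwa [hP.eq_of_mem_of_mem hB hC hx hxC]
    · intro hy
      rcases le_total x y with hxy | hyx
      · exact Or.inl ⟨hy, hxy⟩
      · exact Or.inr ((hP.reflTransGen_isArc_iff hB hy).mpr ⟨hx, hyx⟩)
  ext B
  simp only [linkedBlocks, mem_image, mem_univ, true_and]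
  constructor
  · rintro ⟨x, rfl⟩
    obtain ⟨C, hC, hxC⟩ := hP.2.2 x
    rwa [hblock hC hxC]
  · intro hB
    obtain ⟨x, hx⟩ := hP.1 B hB
    exact ⟨x, hblock hB hx⟩

end IsSetPartition

section Cells

variable {m n : ℕ}

open Classical in
noncomputable def relCells (R : Fin m → Fin m → Prop) : Finset (ℕ × ℕ) :=
  (univ.filter fun p : Fin m × Fin m => R p.1 p.2).image fun p => ((p.2 : ℕ), (p.1 : ℕ) + 1)

def cellRel (S : Finset (ℕ × ℕ)) (a b : Fin m) : Prop :=
  a < b ∧ ((b : ℕ), (a : ℕ) + 1) ∈ S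

theorem mem_relCells {R : Fin m → Fin m → Prop} {q : ℕ × ℕ} :
    q ∈ relCells R ↔ ∃ a b, R a b ∧ ((b : ℕ), (a : ℕ) + 1) = q := by
  simp [relCells]

theorem cellRel_relCells {R : Fin m → Fin m → Prop} (hinc : ∀ ⦃a b⦄, R a b → a < b) :
    cellRel (relCells R) = R := by
  ext a b
  simp only [cellRel, mem_relCells, Prod.mk.injEq, add_left_inj, Fin.val_inj]
  constructor
  · rintro ⟨-, a', b', h, rfl, rfl⟩
    exact h
  · exact fun h => ⟨hinc h, a, b, h, rfl, rfl⟩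

theorem relCells_cellRel {S : Finset (ℕ × ℕ)} (hS : IsFilling n S) :
    relCells (cellRel (m := n + 1) S) = S := by
  ext ⟨r, c⟩
  rw [mem_relCells]
  constructor
  · rintro ⟨a, b, ⟨-, hab⟩, h⟩
    rwa [← h]
  · intro hrc
    obtain ⟨hc, hcr, hr⟩ := hS.1 _ hrc
    refine ⟨⟨c - 1, by omega⟩, ⟨r, by omega⟩, ⟨Fin.mk_lt_mk.mpr (by omega), ?_⟩, ?_⟩ <;>
      simp only [Nat.sub_add_cancel hc]
    exact hrc

theorem rightUnique_cellRel {S : Finset (ℕ × ℕ)} (hS : IsFilling n S) :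
    Relator.RightUnique (cellRel (m := m) S) := fun _ _ _ hab hac =>
  Fin.ext (congrArg Prod.fst (hS.2.2 _ hab.2 _ hac.2 rfl))

theorem leftUnique_cellRel {S : Finset (ℕ × ℕ)} (hS : IsFilling n S) :
    Relator.LeftUnique (cellRel (m := m) S) := fun _ _ _ hac hbc =>
  Fin.ext (Nat.add_right_cancel (congrArg Prod.snd (hS.2.1 _ hac.2 _ hbc.2 rfl)))

theorem isFilling_relCells {R : Fin (n + 1) → Fin (n + 1) → Prop}
    (hinc : ∀ ⦃a b⦄, R a b → a < b) (hr : Relator.RightUnique R) (hl : Relator.LeftUnique R) :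
    IsFilling n (relCells R) := by
  refine ⟨?_, ?_, ?_⟩ <;> simp only [mem_relCells, forall_exists_index, and_imp]
  · rintro _ a b hab rfl
    have := Fin.lt_def.mp (hinc hab)
    have := b.is_lt
    exact ⟨by omega, by omega, by omega⟩
  · rintro _ a b hab rfl _ a' b' hab' rfl hb
    obtain rfl := Fin.ext hb
    rw [hl hab hab']
  · rintro _ a b hab rfl _ a' b' hab' rfl ha
    obtain rfl := Fin.ext (Nat.add_right_cancel ha)
    rw [hr hab hab']

theorem neChain_relCells_iff {R : Fin m → Fin m → Prop} (hr : Relator.RightUnique R) {k : ℕ} :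
    NEChain (relCells R) k ↔
      ∃ i j : Fin k → Fin m, (∀ t, R (i t) (j t)) ∧ StrictMono i ∧ StrictAnti j := by
  constructor
  · rintro ⟨f, hf, hrow, hcol⟩
    choose i j hij hf using fun t => mem_relCells.mp (hf t)
    have hj : StrictAnti j := fun s t hst => by
      simpa only [← hf, Fin.val_fin_lt] using hrow s t hst
    refine ⟨i, j, hij, fun s t hst => ?_, hj⟩
    have hle : (i s : ℕ) + 1 ≤ i t + 1 := by simpa only [← hf] using hcol s t hst
    -- equal columns mean a common left end, hence by right-uniqueness a common row
    refine (Fin.le_iff_val_le_val.mpr (by omega)).lt_of_ne fun heq => (hj hst).ne ?_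
    exact hr (hij t) (heq ▸ hij s)
  · rintro ⟨i, j, hij, hi, hj⟩
    refine ⟨fun t => ((j t : ℕ), (i t : ℕ) + 1), fun t => mem_relCells.mpr ⟨_, _, hij t, rfl⟩,
      fun s t hst => hj hst, fun s t hst => ?_⟩
    simpa using (hi hst).le

end Cells

section Nesting

variable {m : ℕ} {P : Finset (Finset (Fin m))} {k : ℕ}

theorem not_nonnesting_iff : ¬ Nonnesting k P ↔
    ∃ i j : Fin k → Fin m, (∀ t, IsArc P (i t) (j t)) ∧ StrictMono i ∧ StrictAnti j := by
  rw [Nonnesting, not_not]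
  constructor
  · rintro ⟨i, j, hij, hi, hj, -⟩
    exact ⟨i, j, hij, fun s t => hi s t, fun s t => hj s t⟩
  · rintro ⟨i, j, hij, hi, hj⟩
    refine ⟨i, j, hij, fun s t => @hi s t, fun s t => @hj s t, fun s t => ?_⟩
    calc i s ≤ i (max s t) := hi.monotone (le_max_left s t)
      _ < j (max s t) := (hij _).1
      _ ≤ j t := hj.antitone (le_max_right s t)

theorem IsSetPartition.neChain_relCells_isArc_iff (hP : IsSetPartition P) :
    NEChain (relCells (IsArc P)) k ↔ ¬ Nonnesting k P :=
  (neChain_relCells_iff hP.rightUnique_isArc).trans not_nonnesting_iff.symm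

theorem injOn_relCells_isArc :
    Set.InjOn (fun P => relCells (IsArc P)) {P : Finset (Finset (Fin m)) | IsSetPartition P} :=
  fun P hP Q hQ h => by
    have harcs : IsArc P = IsArc Q := by
      rw [← cellRel_relCells (R := IsArc P) fun _ _ h => h.1,
        ← cellRel_relCells (R := IsArc Q) fun _ _ h => h.1]
      exact congrArg cellRel h
    rw [← IsSetPartition.linkedBlocks_isArc hP, harcs, IsSetPartition.linkedBlocks_isArc hQ]

end Nesting

theorem IsFilling.exists_relCells_isArc_eq {n : ℕ} {S : Finset (ℕ × ℕ)} (hS : IsFilling n S) :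
    ∃ P : Finset (Finset (Fin (n + 1))), IsSetPartition P ∧ relCells (IsArc P) = S := by
  have hinc : ∀ ⦃a b : Fin (n + 1)⦄, cellRel S a b → a < b := fun _ _ h => h.1
  have hr := rightUnique_cellRel (m := n + 1) hS
  have hl := leftUnique_cellRel (m := n + 1) hS
  exact ⟨_, isSetPartition_linkedBlocks hr hl,
    by rw [isArc_linkedBlocks hinc hr hl, relCells_cellRel hS]⟩

theorem stmt13_general (n k : ℕ) :
    {P : Finset (Finset (Fin (n + 1))) | IsSetPartition P ∧ Nonnesting k P}.ncard =
    {S : Finset (ℕ × ℕ) | IsFilling n S ∧ ¬ NEChain S k}.ncard := by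
  have himage : {S : Finset (ℕ × ℕ) | IsFilling n S ∧ ¬ NEChain S k} =
      (fun P => relCells (IsArc P)) ''
        {P : Finset (Finset (Fin (n + 1))) | IsSetPartition P ∧ Nonnesting k P} := by
    ext S
    constructor
    · rintro ⟨hS, hchain⟩
      obtain ⟨P, hP, rfl⟩ := hS.exists_relCells_isArc_eq
      exact ⟨P, ⟨hP, not_not.mp (mt hP.neChain_relCells_isArc_iff.mpr hchain)⟩, rfl⟩
    · rintro ⟨P, ⟨hP, hnest⟩, rfl⟩
      exact ⟨isFilling_relCells (fun _ _ h => h.1) hP.rightUnique_isArc hP.leftUnique_isArc,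
        fun hchain => hP.neChain_relCells_isArc_iff.mp hchain hnest⟩
  rw [himage, (injOn_relCells_isArc.mono fun P hP => hP.1).ncard_image]

/-- Theorem 2.8: for every `n ≥ 0` and `k ≥ 1`, `k`-nonnesting set partitions of
`{1, …, n+1}` are equinumerous with 01-fillings of `Δ_n` with at most one 1 per row and
per column and no NE-chain of length `k`. -/
theorem stmt13 (n k : ℕ) (hk : 1 ≤ k) :
    {P : Finset (Finset (Fin (n + 1))) | IsSetPartition P ∧ Nonnesting k P}.ncard =
    {S : Finset (ℕ × ℕ) | IsFilling n S ∧ ¬ NEChain S k}.ncard :=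
  stmt13_general n k
end

section
/- For every n ≥ 0, the number of sequences (a_1, …, a_n) with 1 ≤ a_i ≤ i for all i equals the number of sequences (λ^0, λ^1, …, λ^{2n}) of partitions with λ^0 = λ^{2n} = ∅ such that for each i, λ^{2i+1} is obtained from λ^{2i} by adding a (possibly empty) horizontal strip, and λ^{2i+2} is obtained from λ^{2i+1} by deleting exactly one square. -/
/-- A partition: a weakly decreasing, eventually-zero sequence of nonnegative integers
(`parts i` is the `(i+1)`-st part `λ_{i+1}`). -/
structure Partn where
  parts : ℕ → ℕ
  antitone : ∀ i j, i ≤ j → parts j ≤ parts i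
  eventually_zero : ∃ N, ∀ i, N ≤ i → parts i = 0

/-- The empty partition `∅`. -/
def Partn.empty : Partn :=
  ⟨fun _ => 0, fun _ _ _ => le_rfl, ⟨0, fun _ _ => rfl⟩⟩

/-- `lam` is obtained from `μ` by adding a square (equivalently, `μ` is obtained from
`lam` by deleting a square): one part grows by 1 and all other parts agree. -/
def AddSqP (μ lam : Partn) : Prop :=
  ∃ j, lam.parts j = μ.parts j + 1 ∧ ∀ i, i ≠ j → lam.parts i = μ.parts i

/-- `lam` is obtained from `μ` by adding a (possibly empty) horizontal strip:
`μ_i ≤ λ_i` and `λ_{i+1} ≤ μ_i` for all `i`. -/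
def HStrip (μ lam : Partn) : Prop :=
  ∀ j, μ.parts j ≤ lam.parts j ∧ lam.parts (j + 1) ≤ μ.parts j

/-!
Both sides equal `n!`; for the fillings this is `1 · 2 ⋯ n`. Let `W(n, μ)` be the sequences of `n`
(strip, square) steps from `∅` to `μ`, and `z(n, μ) = s_μ(1ⁿ)` the number of chains of `n`
horizontal strips from `∅` to `μ`. Cutting off the last two steps gives
`|W(n+1, μ)| = ∑_{λ = μ + □} ∑_{λ/ν strip} |W(n, ν)|`, so the Pieri identity
`∑_{λ = μ + □} z(n, λ) = n · z(n, μ)` gives `|W(n, μ)| = n! · z(n, μ)` by induction, and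
`z(n, ∅) = 1`. The Pieri identity follows by induction on `n` from the commutation relation
`D U = U D + D` (`U` adds a square, `D` removes a horizontal strip), which comes down to counting
the rows where a square can be added to one partition or removed from the other.
-/

open Function

namespace Partn

theorem ext {μ ν : Partn} (h : μ.parts = ν.parts) : μ = ν := by
  cases μ; cases ν; congr

theorem parts_injective : Injective Partn.parts := fun _ _ => ext

theorem antitone_parts (μ : Partn) : Antitone μ.parts :=
  fun i j hij => μ.antitone i j hij

theorem parts_succ_le (μ : Partn) (i : ℕ) : μ.parts (i + 1) ≤ μ.parts i :=
  μ.antitone_parts i.le_succ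

theorem parts_le_parts_zero (μ : Partn) (i : ℕ) : μ.parts i ≤ μ.parts 0 :=
  μ.antitone_parts i.zero_le

theorem parts_eq_zero_of_le {μ : Partn} {N i : ℕ} (hN : μ.parts N = 0) (hi : N ≤ i) :
    μ.parts i = 0 :=
  Nat.eq_zero_of_le_zero (hN ▸ μ.antitone N i hi)

theorem eq_empty_iff {μ : Partn} : μ = Partn.empty ↔ μ.parts 0 = 0 :=
  ⟨fun h => h ▸ rfl, fun h => ext (funext fun _ => parts_eq_zero_of_le h (Nat.zero_le _))⟩

def box (N B : ℕ) : Set Partn := {ν | ν.parts 0 ≤ B ∧ ν.parts N = 0}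

theorem finite_box (N B : ℕ) : (box N B).Finite := by
  refine Set.finite_coe_iff.mp (Finite.of_injective (β := Fin N → Fin (B + 1))
    (fun ν i => ⟨ν.1.parts i, Nat.lt_succ_of_le ((ν.1.parts_le_parts_zero i).trans ν.2.1)⟩) ?_)
  rintro ⟨ν, hν⟩ ⟨ρ, hρ⟩ h
  refine Subtype.ext (ext (funext fun i => ?_))
  by_cases hi : i < N
  · exact congrArg Fin.val (congrFun h ⟨i, hi⟩)
  · rw [parts_eq_zero_of_le hν.2 (not_lt.mp hi), parts_eq_zero_of_le hρ.2 (not_lt.mp hi)]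

theorem box_mono {N N' B B' : ℕ} (hN : N ≤ N') (hB : B ≤ B') : box N B ⊆ box N' B' :=
  fun _ h => ⟨h.1.trans hB, parts_eq_zero_of_le h.2 hN⟩

end Partn

/-- `HStrip` for arbitrary sequences: `b₀ ≥ a₀ ≥ b₁ ≥ a₁ ≥ ⋯`. -/
def Interlace (a b : ℕ → ℕ) : Prop := ∀ i, a i ≤ b i ∧ b (i + 1) ≤ a i

section Interlace

variable {s t : ℕ → ℕ}

theorem Interlace.update_zero (h : Interlace s t) : Interlace s (update t 0 (t 0 + 1)) := by
  intro i
  have := h i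
  grind [update_apply]

theorem Interlace.update_succ_iff (h : Interlace s t) (k : ℕ) :
    Interlace s (update t (k + 1) (t (k + 1) + 1)) ↔ t (k + 1) < s k := by
  refine ⟨fun hL => by simpa using (hL k).2, fun hlt i => ?_⟩
  have := h i
  grind [update_apply]

theorem Interlace.update_pred_iff (h : Interlace s t) (k : ℕ) :
    (0 < s k ∧ Interlace (update s k (s k - 1)) t) ↔ t (k + 1) < s k := by
  refine ⟨fun ⟨hpos, hR⟩ => ?_, fun hlt => ⟨by omega, fun i => ?_⟩⟩
  · have := (hR k).2
    rw [update_self] at this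
    omega
  · have := h i
    grind [update_apply]

-- Without interlacing, either side forces `s j = t j + 1`, and `j` is the only place where
-- `s` and `t` fail to interlace.
theorem interlace_update_succ_iff_of_not_interlace (hs : Antitone s) (ht : Antitone t)
    (hst : ¬Interlace s t) (j : ℕ) :
    Interlace s (update t j (t j + 1)) ↔ 0 < s j ∧ Interlace (update s j (s j - 1)) t := by
  constructor
  · intro hL
    have hj : s j = t j + 1 := by
      by_contra hne
      refine hst fun i => ?_
      have := hL i
      grind [update_apply]
    refine ⟨by omega, fun i => ?_⟩
    have := hL i
    have := ht (Nat.le_succ j)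
    grind [update_apply]
  · rintro ⟨hpos, hR⟩
    have hj : s j = t j + 1 := by
      by_contra hne
      refine hst fun i => ?_
      have := hR i
      grind [update_apply]
    intro i
    have := hR i
    have := hs (Nat.le_succ i)
    grind [update_apply]

open Classical in
theorem encard_interlace_update_succ (hs : Antitone s) (ht : Antitone t) :
    {j | Interlace s (update t j (t j + 1))}.encard =
      {j | 0 < s j ∧ Interlace (update s j (s j - 1)) t}.encard +
        if Interlace s t then 1 else 0 := by
  split_ifs with hst
  · have : {j | Interlace s (update t j (t j + 1))} =
        insert 0 (Nat.succ '' {j | 0 < s j ∧ Interlace (update s j (s j - 1)) t}) := by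
      ext (_ | k)
      · simp [hst.update_zero]
      · simp [hst.update_succ_iff, hst.update_pred_iff]
    rw [this, Set.encard_insert_of_notMem (by simp), Nat.succ_injective.encard_image]
  · simp only [add_zero, interlace_update_succ_iff_of_not_interlace hs ht hst]

end Interlace

namespace Partn

def ofInterlaceRight (μ : Partn) (b : ℕ → ℕ) (h : Interlace μ.parts b) : Partn where
  parts := b
  antitone _ _ hij := antitone_nat_of_succ_le (fun i => (h i).2.trans (h i).1) hij
  eventually_zero := by
    obtain ⟨N, hN⟩ := μ.eventually_zero
    refine ⟨N + 1, fun i hi => ?_⟩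
    obtain ⟨k, rfl⟩ : ∃ k, i = k + 1 := ⟨i - 1, by omega⟩
    exact Nat.eq_zero_of_le_zero ((h k).2.trans (hN k (by omega)).le)

def ofInterlaceLeft (a : ℕ → ℕ) (μ : Partn) (h : Interlace a μ.parts) : Partn where
  parts := a
  antitone _ _ hij := antitone_nat_of_succ_le (fun i => (h (i + 1)).1.trans (h i).2) hij
  eventually_zero := by
    obtain ⟨N, hN⟩ := μ.eventually_zero
    exact ⟨N, fun i hi => Nat.eq_zero_of_le_zero ((h i).1.trans (hN i hi).le)⟩

theorem addSqP_iff {μ lam : Partn} :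
    AddSqP μ lam ↔ ∃ j, lam.parts = update μ.parts j (μ.parts j + 1) := by
  refine ⟨fun ⟨j, hj, hne⟩ => ⟨j, funext fun i => ?_⟩, fun ⟨j, h⟩ => ⟨j, ?_, fun i hi => ?_⟩⟩
  · by_cases hi : i = j
    · subst hi; simp [hj]
    · simp [hi, hne i hi]
  · simp [h]
  · simp [h, hi]

theorem addSqP_iff_exists_update_pred {ρ μ : Partn} :
    AddSqP ρ μ ↔ ∃ j, 0 < μ.parts j ∧ ρ.parts = update μ.parts j (μ.parts j - 1) := by
  refine ⟨fun ⟨j, hj, hne⟩ => ⟨j, by omega, funext fun i => ?_⟩,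
    fun ⟨j, hj, h⟩ => ⟨j, ?_, fun i hi => ?_⟩⟩
  · by_cases hi : i = j
    · subst hi; simp [hj]
    · simp [hi, hne i hi]
  · simp [h]; omega
  · simp [h, hi]

theorem injective_update_succ (t : ℕ → ℕ) : Injective fun j => update t j (t j + 1) := by
  intro j k h
  by_contra hjk
  simpa [hjk] using congrFun h j

theorem injOn_update_pred (s : ℕ → ℕ) :
    Set.InjOn (fun j => update s j (s j - 1)) {j | 0 < s j} := by
  intro j (hj : 0 < s j) k _ h
  by_contra hjk
  have : s j - 1 = s j := by simpa [hjk] using congrFun h j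
  omega

theorem encard_addSq_hstrip_eq_encard_update (s t : Partn) :
    {lam | AddSqP t lam ∧ HStrip s lam}.encard =
      {j | Interlace s.parts (update t.parts j (t.parts j + 1))}.encard := by
  rw [← parts_injective.encard_image, ← (injective_update_succ t.parts).encard_image]
  congr 1
  ext b
  simp only [Set.mem_image, Set.mem_ofPred_eq, addSqP_iff]
  constructor
  · rintro ⟨lam, ⟨⟨j, hj⟩, hs⟩, rfl⟩
    exact ⟨j, hj ▸ hs, hj.symm⟩
  · rintro ⟨j, hs, rfl⟩
    exact ⟨ofInterlaceRight s _ hs, ⟨⟨j, rfl⟩, hs⟩, rfl⟩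

theorem encard_removeSq_hstrip_eq_encard_update (s t : Partn) :
    {ρ | AddSqP ρ s ∧ HStrip ρ t}.encard =
      {j | 0 < s.parts j ∧ Interlace (update s.parts j (s.parts j - 1)) t.parts}.encard := by
  rw [← parts_injective.encard_image,
    ← ((injOn_update_pred s.parts).mono fun j hj => hj.1).encard_image]
  congr 1
  ext b
  simp only [Set.mem_image, Set.mem_ofPred_eq, addSqP_iff_exists_update_pred]
  constructor
  · rintro ⟨ρ, ⟨⟨j, hpos, hj⟩, hs⟩, rfl⟩
    exact ⟨j, ⟨hpos, hj ▸ hs⟩, hj.symm⟩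
  · rintro ⟨j, ⟨hpos, hs⟩, rfl⟩
    exact ⟨ofInterlaceLeft _ t hs, ⟨⟨j, hpos, rfl⟩, hs⟩, rfl⟩

open Classical in
/-- The commutation relation `D U = U D + D`, where `U` adds a square and `D` removes a horizontal
strip (`[h_k^⊥, h₁] = h_{k-1}^⊥`, summed over `k`). -/
theorem encard_addSq_hstrip_eq_encard_removeSq_hstrip_add (s t : Partn) :
    {lam | AddSqP t lam ∧ HStrip s lam}.encard =
      {ρ | AddSqP ρ s ∧ HStrip ρ t}.encard + if HStrip s t then 1 else 0 := by
  rw [encard_addSq_hstrip_eq_encard_update, encard_removeSq_hstrip_eq_encard_update,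
    encard_interlace_update_succ s.antitone_parts t.antitone_parts]
  rfl

theorem hstrip_of_addSqP {μ lam : Partn} (h : AddSqP μ lam) : HStrip μ lam := by
  obtain ⟨j, hj, hne⟩ := h
  intro i
  constructor
  · by_cases hi : i = j
    · subst hi; omega
    · exact (hne i hi).ge
  · by_cases hi : i + 1 = j
    · subst hi; exact (lam.parts_succ_le i).trans (hne i (by omega)).le
    · exact (hne (i + 1) hi).trans_le (μ.parts_succ_le i)

theorem parts_zero_le_of_addSqP {μ lam : Partn} (h : AddSqP μ lam) :
    lam.parts 0 ≤ μ.parts 0 + 1 := by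
  obtain ⟨j, hj, hne⟩ := h
  by_cases h0 : 0 = j
  · subst h0; omega
  · exact (hne 0 h0).trans_le (Nat.le_succ _)

theorem exists_mem_box (μ : Partn) : ∃ N, μ ∈ box N (μ.parts 0) := by
  obtain ⟨N, hN⟩ := μ.eventually_zero
  exact ⟨N, le_rfl, hN N le_rfl⟩

theorem HStrip.mem_box {ν μ : Partn} (h : HStrip ν μ) {N B : ℕ} (hμ : μ ∈ box N B) :
    ν ∈ box N B :=
  ⟨(h 0).1.trans hμ.1, Nat.eq_zero_of_le_zero ((h N).1.trans hμ.2.le)⟩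

theorem AddSqP.mem_box_succ {μ lam : Partn} (h : AddSqP μ lam) {N B : ℕ} (hμ : μ ∈ box N B) :
    lam ∈ box (N + 1) (B + 1) :=
  ⟨(parts_zero_le_of_addSqP h).trans (Nat.succ_le_succ hμ.1),
    Nat.eq_zero_of_le_zero (((hstrip_of_addSqP h) N).2.trans hμ.2.le)⟩

theorem finite_setOf_hstrip (μ : Partn) : {ν | HStrip ν μ}.Finite := by
  obtain ⟨N, hN⟩ := μ.exists_mem_box
  exact (finite_box N _).subset fun ν h => HStrip.mem_box h hN

theorem finite_setOf_addSqP (μ : Partn) : {lam | AddSqP μ lam}.Finite := by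
  obtain ⟨N, hN⟩ := μ.exists_mem_box
  exact (finite_box (N + 1) _).subset fun lam h => AddSqP.mem_box_succ h hN

noncomputable def hstripFinset (μ : Partn) : Finset Partn := (finite_setOf_hstrip μ).toFinset

noncomputable def addSqFinset (μ : Partn) : Finset Partn := (finite_setOf_addSqP μ).toFinset

@[simp] theorem mem_hstripFinset {ν μ : Partn} : ν ∈ μ.hstripFinset ↔ HStrip ν μ :=
  Set.Finite.mem_toFinset _

@[simp] theorem mem_addSqFinset {μ lam : Partn} : lam ∈ μ.addSqFinset ↔ AddSqP μ lam :=
  Set.Finite.mem_toFinset _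

open Classical in
theorem card_filter_addSqFinset (s t : Partn) :
    (t.addSqFinset.filter (HStrip s)).card =
      (t.hstripFinset.filter fun ρ => AddSqP ρ s).card + if HStrip s t then 1 else 0 := by
  have h := encard_addSq_hstrip_eq_encard_removeSq_hstrip_add s t
  rw [← ENat.natCast_inj]
  push_cast
  rw [← Set.encard_coe_eq_coe_finsetCard, ← Set.encard_coe_eq_coe_finsetCard]
  simpa [Finset.coe_filter, and_comm] using h

open Classical in
/-- Semistandard tableaux of shape `μ` with entries at most `n`, as chains of `n` horizontal strips
from `∅` to `μ`; this is `s_μ(1ⁿ)`. -/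
noncomputable def ssytCount : ℕ → Partn → ℕ
  | 0, μ => if μ = Partn.empty then 1 else 0
  | n + 1, μ => ∑ ν ∈ μ.hstripFinset, ssytCount n ν

theorem hstrip_empty_iff {ν : Partn} : HStrip ν Partn.empty ↔ ν = Partn.empty :=
  ⟨fun h => eq_empty_iff.mpr (Nat.eq_zero_of_le_zero (h 0).1),
    by rintro rfl; exact fun _ => ⟨le_rfl, le_rfl⟩⟩

theorem ssytCount_empty (n : ℕ) : ssytCount n Partn.empty = 1 := by
  induction n with
  | zero => simp [ssytCount]
  | succ n ih =>
    have : Partn.empty.hstripFinset = {Partn.empty} := by ext; simp [hstrip_empty_iff]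
    simp [ssytCount, this, ih]

theorem ssytCount_zero_of_addSqP {μ lam : Partn} (h : AddSqP μ lam) : ssytCount 0 lam = 0 := by
  obtain ⟨j, hj, -⟩ := h
  have : lam.parts 0 ≠ 0 := by
    have := lam.parts_le_parts_zero j
    omega
  simp [ssytCount, eq_empty_iff, this]

/-- The Pieri rule `p₁ s_μ = ∑_{λ = μ + □} s_λ`, evaluated at `1ⁿ`. -/
theorem sum_ssytCount_addSqFinset (n : ℕ) (μ : Partn) :
    ∑ lam ∈ μ.addSqFinset, ssytCount n lam = n * ssytCount n μ := by
  classical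
  induction n generalizing μ with
  | zero => simpa using fun lam h => ssytCount_zero_of_addSqP h
  | succ n ih =>
    obtain ⟨N, hN⟩ := μ.exists_mem_box
    let V := (finite_box (N + 1) (μ.parts 0 + 1)).toFinset
    have hV_up : ∀ lam ν, AddSqP μ lam → HStrip ν lam → ν ∈ V := fun lam ν hlam hν =>
      (finite_box _ _).mem_toFinset.mpr (HStrip.mem_box hν (AddSqP.mem_box_succ hlam hN))
    have hV_down : ∀ ρ ν, HStrip ρ μ → AddSqP ρ ν → ν ∈ V := fun ρ ν hρ hν =>
      (finite_box _ _).mem_toFinset.mpr (AddSqP.mem_box_succ hν (HStrip.mem_box hρ hN))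
    have hV : ∀ ν, HStrip ν μ → ν ∈ V := fun ν hν =>
      (finite_box _ _).mem_toFinset.mpr
        (box_mono (Nat.le_succ N) (Nat.le_succ _) (HStrip.mem_box hν hN))
    calc ∑ lam ∈ μ.addSqFinset, ssytCount (n + 1) lam
        = ∑ ν ∈ V, ∑ _lam ∈ μ.addSqFinset.filter (HStrip ν), ssytCount n ν :=
          Finset.sum_comm' fun lam ν => by
            simp only [mem_addSqFinset, mem_hstripFinset, Finset.mem_filter]
            exact ⟨fun h => ⟨h, hV_up lam ν h.1 h.2⟩, fun h => h.1⟩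
      _ = ∑ ν ∈ V, ((μ.hstripFinset.filter fun ρ => AddSqP ρ ν).card * ssytCount n ν +
            if HStrip ν μ then ssytCount n ν else 0) := by
          refine Finset.sum_congr rfl fun ν _ => ?_
          rw [Finset.sum_const, smul_eq_mul, card_filter_addSqFinset]
          split_ifs <;> ring
      _ = ∑ ρ ∈ μ.hstripFinset, ∑ ν ∈ ρ.addSqFinset, ssytCount n ν +
            ∑ ν ∈ μ.hstripFinset, ssytCount n ν := by
          rw [Finset.sum_add_distrib]
          congr 1
          · rw [Finset.sum_comm' (t' := V)
              (s' := fun ν => μ.hstripFinset.filter fun ρ => AddSqP ρ ν)]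
            · simp only [Finset.sum_const, smul_eq_mul]
            intro ρ ν
            simp only [mem_addSqFinset, mem_hstripFinset, Finset.mem_filter]
            exact ⟨fun h => ⟨⟨h.1, h.2⟩, hV_down ρ ν h.1 h.2⟩, fun h => h.1⟩
          · rw [← Finset.sum_filter]
            congr 1
            ext ν
            simpa using hV ν
      _ = (n + 1) * ssytCount (n + 1) μ := by
          simp only [ih, ← Finset.mul_sum, ssytCount]
          ring

def stripSquareWalks (n : ℕ) (μ : Partn) : Set (ℕ → Partn) :=
  {f | f 0 = Partn.empty ∧
    (∀ i < n, HStrip (f (2 * i)) (f (2 * i + 1)) ∧ AddSqP (f (2 * i + 2)) (f (2 * i + 1))) ∧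
    f (2 * n) = μ ∧ ∀ i, 2 * n < i → f i = Partn.empty}

def extendWalk (n : ℕ) (lam μ : Partn) (g : ℕ → Partn) : ℕ → Partn :=
  update (update g (2 * n + 1) lam) (2 * n + 2) μ

section extendWalk

variable {n i : ℕ} {lam μ : Partn} {g : ℕ → Partn}

theorem extendWalk_apply_of_le (hi : i ≤ 2 * n) : extendWalk n lam μ g i = g i := by
  simp [extendWalk, show i ≠ 2 * n + 1 by omega, show i ≠ 2 * n + 2 by omega]

@[simp] theorem extendWalk_apply_odd : extendWalk n lam μ g (2 * n + 1) = lam := by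
  simp [extendWalk]

@[simp] theorem extendWalk_apply_even : extendWalk n lam μ g (2 * n + 2) = μ := by
  simp [extendWalk]

theorem extendWalk_apply_of_gt (hi : 2 * n + 2 < i) : extendWalk n lam μ g i = g i := by
  simp [extendWalk, show i ≠ 2 * n + 1 by omega, show i ≠ 2 * n + 2 by omega]

theorem extendWalk_extendWalk (lam' μ' : Partn) :
    extendWalk n lam μ (extendWalk n lam' μ' g) = extendWalk n lam μ g := by
  simp [extendWalk, update_idem, update_comm (show 2 * n + 1 ≠ 2 * n + 2 by omega)]

end extendWalk

theorem injOn_extendWalk (n : ℕ) (lam μ ν : Partn) :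
    Set.InjOn (extendWalk n lam μ) (stripSquareWalks n ν) := by
  intro g hg g' hg' h
  funext i
  by_cases hi : i ≤ 2 * n
  · simpa [extendWalk_apply_of_le hi] using congrFun h i
  · rw [hg.2.2.2 i (by omega), hg'.2.2.2 i (by omega)]

theorem stripSquareWalks_succ (n : ℕ) (μ : Partn) :
    stripSquareWalks (n + 1) μ = ⋃ lam ∈ (μ.addSqFinset : Set Partn),
      ⋃ ν ∈ (lam.hstripFinset : Set Partn), extendWalk n lam μ '' stripSquareWalks n ν := by
  ext f
  simp only [Set.mem_iUnion, Set.mem_image, Finset.mem_coe, mem_addSqFinset, mem_hstripFinset]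
  constructor
  · rintro ⟨h0, hsteps, htop, hbig⟩
    have htop : f (2 * n + 2) = μ := htop
    refine ⟨f (2 * n + 1), htop ▸ (hsteps n n.lt_succ_self).2, f (2 * n),
      (hsteps n n.lt_succ_self).1, extendWalk n Partn.empty Partn.empty f,
      ⟨?_, fun i hi => ?_, ?_, fun i hi => ?_⟩, ?_⟩
    · rwa [extendWalk_apply_of_le (Nat.zero_le _)]
    · rw [extendWalk_apply_of_le (by omega), extendWalk_apply_of_le (by omega),
        extendWalk_apply_of_le (by omega)]
      exact hsteps i (by omega)
    · exact extendWalk_apply_of_le le_rfl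
    · obtain rfl | rfl | hi := show i = 2 * n + 1 ∨ i = 2 * n + 2 ∨ 2 * n + 2 < i by omega
      · exact extendWalk_apply_odd
      · exact extendWalk_apply_even
      · rw [extendWalk_apply_of_gt hi, hbig i (by omega)]
    · rw [extendWalk_extendWalk, ← htop]
      simp [extendWalk]
  · rintro ⟨lam, hlam, ν, hν, g, ⟨h0, hsteps, htop, hbig⟩, rfl⟩
    refine ⟨?_, fun i hi => ?_, extendWalk_apply_even, fun i hi => ?_⟩
    · rwa [extendWalk_apply_of_le (Nat.zero_le _)]
    · obtain hi | rfl := Nat.lt_succ_iff_lt_or_eq.mp hi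
      · rw [extendWalk_apply_of_le (by omega), extendWalk_apply_of_le (by omega),
          extendWalk_apply_of_le (by omega)]
        exact hsteps i hi
      · rw [extendWalk_apply_of_le le_rfl, htop, extendWalk_apply_odd, extendWalk_apply_even]
        exact ⟨hν, hlam⟩
    · rw [extendWalk_apply_of_gt (by omega), hbig i (by omega)]

open Classical in
theorem stripSquareWalks_zero (μ : Partn) :
    stripSquareWalks 0 μ = if μ = Partn.empty then {fun _ : ℕ => Partn.empty} else ∅ := by
  split_ifs with hμ
  · subst hμ
    ext f
    refine ⟨fun ⟨h0, _, _, hbig⟩ => funext fun i => ?_, ?_⟩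
    · rcases i with _ | i
      · exact h0
      · exact hbig _ i.succ_pos
    · rintro rfl
      exact ⟨rfl, fun i hi => absurd hi i.not_lt_zero, rfl, fun _ _ => rfl⟩
  · exact Set.eq_empty_of_forall_notMem fun f ⟨h0, _, htop, _⟩ => hμ (htop ▸ h0)

open Nat in
theorem encard_stripSquareWalks (n : ℕ) (μ : Partn) :
    (stripSquareWalks n μ).encard = (n ! * ssytCount n μ : ℕ) := by
  induction n generalizing μ with
  | zero =>
    rw [stripSquareWalks_zero]
    split_ifs with hμ <;> simp [ssytCount, hμ]
  | succ n ih =>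
    have hdisj : ∀ {lam ν lam' ν' : Partn} {f : ℕ → Partn},
        f ∈ extendWalk n lam μ '' stripSquareWalks n ν →
        f ∈ extendWalk n lam' μ '' stripSquareWalks n ν' → lam = lam' ∧ ν = ν' := by
      rintro lam ν lam' ν' _ ⟨g, hg, rfl⟩ ⟨g', hg', h⟩
      have hodd := congrFun h (2 * n + 1)
      have heven := congrFun h (2 * n)
      simp only [extendWalk_apply_odd, extendWalk_apply_of_le le_rfl, hg.2.2.1, hg'.2.2.1]
        at hodd heven
      exact ⟨hodd.symm, heven.symm⟩
    rw [stripSquareWalks_succ, (Finset.finite_toSet _).encard_biUnion, finsum_mem_coe_finset]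
    · calc ∑ lam ∈ μ.addSqFinset,
            (⋃ ν ∈ (lam.hstripFinset : Set Partn),
              extendWalk n lam μ '' stripSquareWalks n ν).encard
          = ∑ lam ∈ μ.addSqFinset, ∑ ν ∈ lam.hstripFinset, ((n ! * ssytCount n ν : ℕ) : ℕ∞) := by
            refine Finset.sum_congr rfl fun lam _ => ?_
            rw [(Finset.finite_toSet _).encard_biUnion, finsum_mem_coe_finset]
            · exact Finset.sum_congr rfl fun ν _ => by
                rw [(injOn_extendWalk n lam μ ν).encard_image, ih]
            · exact fun ν _ ν' _ hne => Set.disjoint_left.mpr fun f hf hf' => hne (hdisj hf hf').2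
        _ = ((n + 1) ! * ssytCount (n + 1) μ : ℕ) := by
            simp only [← Nat.cast_sum, ← Finset.mul_sum]
            change ((n ! * ∑ lam ∈ μ.addSqFinset, ssytCount (n + 1) lam : ℕ) : ℕ∞) = _
            rw [sum_ssytCount_addSqFinset, Nat.factorial_succ, mul_left_comm, mul_assoc]
    · intro lam _ lam' _ hne
      refine Set.disjoint_left.mpr fun f hf hf' => hne ?_
      simp only [Set.mem_iUnion] at hf hf'
      obtain ⟨ν, -, hf⟩ := hf
      obtain ⟨ν', -, hf'⟩ := hf'
      exact (hdisj hf hf').1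

open Nat in
theorem ncard_stripSquareWalks_empty (n : ℕ) :
    (stripSquareWalks n Partn.empty).ncard = n ! := by
  rw [Set.ncard_def, encard_stripSquareWalks, ssytCount_empty, mul_one, ENat.toNat_natCast]

end Partn

open Nat in
theorem ncard_fillings (n : ℕ) :
    {a : ℕ → ℕ | (∀ i, i = 0 ∨ n < i → a i = 0) ∧
      (∀ i, 1 ≤ i → i ≤ n → 1 ≤ a i ∧ a i ≤ i)}.ncard = n ! := by
  have hcard : (Fintype.piFinset fun i : Fin n => Finset.Icc 1 (i.1 + 1)).card = n ! := by
    simp [Fin.prod_univ_eq_prod_range (fun i => i + 1) n, Finset.prod_range_add_one_eq_factorial]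
  rw [← hcard, ← Set.ncard_coe_finset]
  refine Set.ncard_congr (fun a _ i => a (i + 1)) ?_ ?_ ?_
  · rintro a ⟨-, ha⟩
    simp only [Finset.mem_coe, Fintype.mem_piFinset, Finset.mem_Icc]
    exact fun i => ha _ (Nat.le_add_left _ _) i.2
  · rintro a b ⟨ha, -⟩ ⟨hb, -⟩ h
    funext i
    by_cases hi : i = 0 ∨ n < i
    · rw [ha i hi, hb i hi]
    · obtain ⟨k, rfl⟩ : ∃ k, i = k + 1 := ⟨i - 1, by omega⟩
      exact congrFun h ⟨k, by omega⟩
  · intro g hg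
    simp only [Fintype.mem_piFinset, Finset.mem_Icc, Finset.mem_coe] at hg
    refine ⟨fun i => if h : 0 < i ∧ i ≤ n then g ⟨i - 1, by omega⟩ else 0,
      ⟨fun i hi => dif_neg (by omega), fun i h1 h2 => ?_⟩, funext fun i => ?_⟩
    · have := hg ⟨i - 1, by omega⟩
      simp only at this
      simp only [dif_pos (show 0 < i ∧ i ≤ n by omega)]
      omega
    · simp [i.2]

/-- Theorem 2.4: for every `n ≥ 0`, sequences `(a 1, …, a n)` with `1 ≤ a i ≤ i` (fillings
of `Δ_n` with exactly one 1 per row) are equinumerous with sequences `(λ^0, …, λ^{2n})` of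
partitions with `λ^0 = λ^{2n} = ∅` where each `λ^{2i+1}` is obtained from `λ^{2i}` by
adding a (possibly empty) horizontal strip and each `λ^{2i+2}` is obtained from
`λ^{2i+1}` by deleting exactly one square. -/
theorem stmt16 (n : ℕ) :
    {a : ℕ → ℕ | (∀ i, i = 0 ∨ n < i → a i = 0) ∧
      (∀ i, 1 ≤ i → i ≤ n → 1 ≤ a i ∧ a i ≤ i)}.ncard =
    {f : ℕ → Partn | (∀ i, 2 * n < i → f i = Partn.empty) ∧
      f 0 = Partn.empty ∧ f (2 * n) = Partn.empty ∧
      (∀ i, 2 * i + 1 ≤ 2 * n → HStrip (f (2 * i)) (f (2 * i + 1))) ∧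
      (∀ i, 2 * i + 2 ≤ 2 * n → AddSqP (f (2 * i + 2)) (f (2 * i + 1)))}.ncard := by
  rw [ncard_fillings, eq_comm]
  convert Partn.ncard_stripSquareWalks_empty n using 2
  ext f
  exact ⟨fun ⟨hbig, h0, htop, hodd, heven⟩ =>
      ⟨h0, fun i hi => ⟨hodd i (by omega), heven i (by omega)⟩, htop, hbig⟩,
    fun ⟨h0, hsteps, htop, hbig⟩ =>
      ⟨hbig, h0, htop, fun i hi => (hsteps i (by omega)).1, fun i hi => (hsteps i (by omega)).2⟩⟩
end
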